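/- arXiv:2603.14538 — 5 statements merged into one kernel-verified Lean document; each statement's English description precedes it below -/
import Mathlib

section
/- Model a circuit as a list of gates, each gate given by its support (a Finset ℕ of qubit indices); two gates conflict if their supports have nonempty intersection; depth is the maximum length of a sublist forming a conflict chain. If L₁ and L₂ are cross-disjoint (every support in L₁ is disjoint from every support in L₂), then depth (L₁ ++ L₂) = max (depth L₁) (depth L₂); i.e., segments acting on disjoint qubits can be scheduled concurrently and contribute only the maximum of their depths. -/
/-- Two gates (given by their supports) conflict if their supports intersect. -/
def Conflict (s t : Finset ℕ) : Prop := (s ∩ t).Nonempty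

/-- A conflict chain is a list of gates in which each consecutive pair conflicts. -/
def ConflictChain (c : List (Finset ℕ)) : Prop := c.Chain' Conflict

/-- The depth of a circuit (list of gate supports): the maximum length of a
sublist forming a conflict chain; the empty circuit has depth 0. -/
noncomputable def depth (L : List (Finset ℕ)) : ℕ :=
  sSup {k : ℕ | ∃ c : List (Finset ℕ), c.Sublist L ∧ ConflictChain c ∧ c.length = k}

/-- segments acting on disjoint qubits can be scheduled
concurrently: their concatenation has depth equal to the maximum of the two
depths. -/
theorem depth_append_of_crossDisjoint
    (L₁ L₂ : List (Finset ℕ))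
    (hdisj : ∀ s ∈ L₁, ∀ t ∈ L₂, Disjoint s t) :
    depth (L₁ ++ L₂) = max (depth L₁) (depth L₂) := by
  have hset : {k : ℕ | ∃ c : List (Finset ℕ), c.Sublist (L₁ ++ L₂) ∧ ConflictChain c ∧ c.length = k}
      = {k : ℕ | ∃ c : List (Finset ℕ), c.Sublist L₁ ∧ ConflictChain c ∧ c.length = k}
      ∪ {k : ℕ | ∃ c : List (Finset ℕ), c.Sublist L₂ ∧ ConflictChain c ∧ c.length = k} := by
    ext k
    constructor
    · rintro ⟨c, hsub, hchain, hlen⟩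
      rw [List.sublist_append_iff] at hsub
      obtain ⟨a, b, rfl, ha, hb⟩ := hsub
      rcases List.eq_nil_or_concat a with rfl | ⟨a', x, rfl⟩
      · right; exact ⟨b, hb, hchain, by simpa using hlen⟩
      rcases b with _ | ⟨y, b'⟩
      · left; exact ⟨_, ha, by simpa [ConflictChain] using hchain, by simpa using hlen⟩
      · exfalso
        have hR : Conflict x y := by
          rw [ConflictChain, List.Chain', List.isChain_append] at hchain
          exact hchain.2.2 x (by simp) y (by simp)
        have hx : x ∈ L₁ := ha.mem (by simp)
        have hy : y ∈ L₂ := hb.mem (by simp)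
        have hd := hdisj x hx y hy
        rw [Finset.disjoint_iff_inter_eq_empty] at hd
        rw [Conflict, hd] at hR
        simp at hR
    · rintro (⟨c, hsub, hchain, hlen⟩ | ⟨c, hsub, hchain, hlen⟩)
      · exact ⟨c, hsub.trans (List.sublist_append_left _ _), hchain, hlen⟩
      · exact ⟨c, hsub.trans (List.sublist_append_right _ _), hchain, hlen⟩
  have hbdd : ∀ L : List (Finset ℕ),
      BddAbove {k : ℕ | ∃ c : List (Finset ℕ), c.Sublist L ∧ ConflictChain c ∧ c.length = k} := by
    intro L
    exact ⟨L.length, by rintro k ⟨c, hsub, _, rfl⟩; exact hsub.length_le⟩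
  have hne : ∀ L : List (Finset ℕ),
      ({k : ℕ | ∃ c : List (Finset ℕ), c.Sublist L ∧ ConflictChain c ∧ c.length = k}).Nonempty :=
    fun L => ⟨0, [], List.nil_sublist _, List.isChain_nil, rfl⟩
  rw [depth, hset, csSup_union (hbdd L₁) (hne L₁) (hbdd L₂) (hne L₂)]
  rfl
end

section
/- Model a circuit as a list of gates, each gate given by its support (a Finset ℕ of qubit indices); two gates conflict if their supports have nonempty intersection; depth is the maximum length of a sublist forming a conflict chain. Let F be a forward segment, A an adjoint (uncomputation) segment inserted at the earliest safe reclamation point, and R the remaining forward computation, and suppose A and R are cross-disjoint (every support in A is disjoint from every support in R). Then depth (F ++ A ++ R) ≤ depth F + max (depth A) (depth R) (Depth Bound under Early Reclamation). -/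
/-- Depth Bound under Early Reclamation: if the adjoint segment
`A` and the remaining forward computation `R` act on disjoint qubits, then
`depth (F ++ A ++ R) ≤ depth F + max (depth A) (depth R)`. -/
theorem depth_bound_early_reclamation
    (F A R : List (Finset ℕ))
    (hdisj : ∀ s ∈ A, ∀ t ∈ R, Disjoint s t) :
    depth (F ++ A ++ R) ≤ depth F + max (depth A) (depth R) := by
  have hle : ∀ (L c : List (Finset ℕ)), c.Sublist L → ConflictChain c →
      c.length ≤ depth L := by
    intro L c hs hc
    exact le_csSup ⟨L.length, fun k ⟨d, hd, _, hdl⟩ => hdl ▸ hd.length_le⟩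
      ⟨c, hs, hc, rfl⟩
  rw [depth]
  refine csSup_le ⟨0, [], List.nil_sublist _, List.isChain_nil, rfl⟩ ?_
  rintro k ⟨c, hs, hc, rfl⟩
  rw [List.append_assoc] at hs
  obtain ⟨c1, c', rfl, h1, h'⟩ := List.sublist_append_iff.mp hs
  obtain ⟨c2, c3, rfl, h2, h3⟩ := List.sublist_append_iff.mp h'
  unfold ConflictChain List.Chain' at hc
  rw [List.isChain_append] at hc
  obtain ⟨hc1, hc23, -⟩ := hc
  rw [List.isChain_append] at hc23
  obtain ⟨hc2, hc3, hbd⟩ := hc23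
  have h23 : c2 = [] ∨ c3 = [] := by
    by_contra h
    push_neg at h
    obtain ⟨h2ne, h3ne⟩ := h
    obtain ⟨x, hx⟩ := List.getLast?_isSome.mpr h2ne |> Option.isSome_iff_exists.mp
    obtain ⟨y, hy⟩ := List.isSome_head?.mpr h3ne |> Option.isSome_iff_exists.mp
    have hconf : Conflict x y := hbd x hx y hy
    have hxA : x ∈ A := h2.mem (List.mem_of_mem_getLast? hx)
    have hyR : y ∈ R := h3.mem (List.mem_of_mem_head? hy)
    exact absurd (hdisj x hxA y hyR) (by
      rw [Finset.disjoint_iff_inter_eq_empty]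
      intro he
      exact absurd hconf (by simp [Conflict, he]))
  have hd1 : c1.length ≤ depth F := hle F c1 h1 hc1
  rcases h23 with h | h
  · subst h
    have : c3.length ≤ depth R := hle R c3 h3 hc3
    simpa using add_le_add hd1 (this.trans (le_max_right _ _))
  · subst h
    have : c2.length ≤ depth A := hle A c2 h2 hc2
    simpa using add_le_add hd1 (this.trans (le_max_left _ _))
end

section
/- Model a circuit as a list of gates, each gate given by its support (a Finset ℕ of qubit indices); two gates conflict if their supports have nonempty intersection; depth is the maximum length of a sublist forming a conflict chain. Let F, A, R be circuit segments with A and R cross-disjoint (every support in A is disjoint from every support in R), and suppose depth A ≤ depth R. Then depth (F ++ A ++ R) ≤ depth F + depth R; i.e., inserting the adjoint segment A at the reclamation point adds no depth beyond that of the forward computation (Zero-Overhead Condition). -/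
lemma depth_le (L : List (Finset ℕ)) (n : ℕ)
    (h : ∀ c : List (Finset ℕ), c.Sublist L → ConflictChain c → c.length ≤ n) :
    depth L ≤ n := by
  have hne : {k : ℕ | ∃ c : List (Finset ℕ), c.Sublist L ∧ ConflictChain c ∧ c.length = k}.Nonempty :=
    ⟨0, [], List.nil_sublist L, List.isChain_nil, rfl⟩
  apply csSup_le hne
  rintro k ⟨c, h1, h2, rfl⟩
  exact h c h1 h2

lemma le_depth (c L : List (Finset ℕ)) (hs : c.Sublist L) (hc : ConflictChain c) :
    c.length ≤ depth L := by
  have hbdd : BddAbove {k : ℕ | ∃ c : List (Finset ℕ), c.Sublist L ∧ ConflictChain c ∧ c.length = k} := by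
    refine ⟨L.length, ?_⟩
    rintro k ⟨c, h1, _, rfl⟩
    exact h1.length_le
  exact le_csSup hbdd ⟨c, hs, hc, rfl⟩

/-- Zero-Overhead Condition: if the adjoint segment `A` is
cross-disjoint from the remaining computation `R` and `depth A ≤ depth R`,
the adjoint adds no depth beyond the forward computation. -/
theorem zero_overhead_condition
    (F A R : List (Finset ℕ))
    (hdisj : ∀ s ∈ A, ∀ t ∈ R, Disjoint s t)
    (hdepth : depth A ≤ depth R) :
    depth (F ++ A ++ R) ≤ depth F + depth R := by
  apply depth_le
  intro c hsub hchain
  rw [List.append_assoc, List.sublist_append_iff] at hsub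
  obtain ⟨c1, c23, rfl, h1, h23⟩ := hsub
  rw [List.sublist_append_iff] at h23
  obtain ⟨c2, c3, rfl, h2, h3⟩ := h23
  unfold ConflictChain List.Chain' at hchain
  rw [List.isChain_append] at hchain
  obtain ⟨hc1, hc23, _⟩ := hchain
  rw [List.isChain_append] at hc23
  obtain ⟨hc2, hc3, hlink⟩ := hc23
  have hcases : c2 = [] ∨ c3 = [] := by
    by_contra h
    push_neg at h
    obtain ⟨hn2, hn3⟩ := h
    obtain ⟨a, ha⟩ := List.getLast?_isSome.2 hn2 |> Option.isSome_iff_exists.1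
    obtain ⟨b, hb⟩ := List.isSome_head?.2 hn3 |> Option.isSome_iff_exists.1
    have hconf : Conflict a b := hlink a ha b hb
    have haA : a ∈ A := by
      obtain ⟨hne2, heq⟩ := List.mem_getLast?_eq_getLast (l := c2) (x := a) ha
      exact h2.mem (heq ▸ List.getLast_mem hne2)
    have hbR : b ∈ R := h3.mem (List.mem_of_mem_head? hb)
    have := hdisj a haA b hbR
    rw [Finset.disjoint_iff_inter_eq_empty] at this
    rw [Conflict, this] at hconf
    exact Finset.not_nonempty_empty hconf
  have h1' : c1.length ≤ depth F := le_depth _ _ h1 hc1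
  simp only [List.length_append]
  rcases hcases with rfl | rfl
  · simp only [List.length_nil, zero_add]
    have := le_depth _ _ h3 hc3
    omega
  · simp only [List.length_nil, add_zero]
    have := (le_depth _ _ h2 hc2).trans hdepth
    omega
end

section
/- Model a circuit as a list of gates, each gate given by its support (a Finset ℕ of qubit indices); two gates conflict if their supports have nonempty intersection; depth is the maximum length of a sublist forming a conflict chain. Let F, A, R be circuit segments with A and R cross-disjoint (every support in A is disjoint from every support in R). Then depth (F ++ A ++ R) = depth (F ++ R ++ A); i.e., placing the adjoint segment early (at the lifetime boundary) yields the same depth as the global compute–then–uncompute placement, so early reclamation never increases depth relative to global cleanup. -/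
lemma chain_transfer (F A R : List (Finset ℕ))
    (hdisj : ∀ s ∈ A, ∀ t ∈ R, Disjoint s t)
    (c : List (Finset ℕ)) (hc : c.Sublist (F ++ A ++ R)) (hch : ConflictChain c) :
    c.Sublist (F ++ R ++ A) := by
  rw [List.append_assoc]
  rw [List.sublist_append_iff] at hc
  obtain ⟨d, e, rfl, hd, he⟩ := hc
  rw [List.sublist_append_iff] at hd
  obtain ⟨d₁, d₂, rfl, hd₁, hd₂⟩ := hd
  rcases eq_or_ne d₂ [] with rfl | hd2ne
  · -- chain lives in F ++ R, which is a sublist of F ++ (R ++ A)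
    simp only [List.append_nil]
    exact (hd₁.append he).trans
      (List.Sublist.append (List.Sublist.refl F) (List.sublist_append_left R A))
  rcases eq_or_ne e [] with rfl | hene
  · simp only [List.append_nil]
    exact (hd₁.append (hd₂.trans (List.sublist_append_right R A)))
  -- contradiction: last of d₂ conflicts with head of e but they are disjoint
  exfalso
  have hx : ((d₁ ++ d₂).getLast? = some (d₂.getLast hd2ne)) := by
    rw [List.getLast?_append_of_ne_nil _ hd2ne, List.getLast?_eq_getLast hd2ne]
  have hy : e.head? = some (e.head hene) := List.head?_eq_head hene
  unfold ConflictChain at hch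
  rw [List.Chain', List.isChain_append] at hch
  obtain ⟨-, -, hrel⟩ := hch
  have hconf : Conflict (d₂.getLast hd2ne) (e.head hene) := hrel _ hx _ hy
  have hmemA : d₂.getLast hd2ne ∈ A := hd₂.subset (List.getLast_mem hd2ne)
  have hmemR : e.head hene ∈ R := he.subset (List.head_mem hene)
  have := hdisj _ hmemA _ hmemR
  rw [Finset.disjoint_iff_inter_eq_empty] at this
  exact absurd hconf (by simp [Conflict, this])

/-- under cross-disjointness of `A` and `R`, early placement of
the adjoint segment yields the same depth as the global
compute–then–uncompute placement. -/
theorem depth_early_eq_global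
    (F A R : List (Finset ℕ))
    (hdisj : ∀ s ∈ A, ∀ t ∈ R, Disjoint s t) :
    depth (F ++ A ++ R) = depth (F ++ R ++ A) := by
  have hdisj' : ∀ s ∈ R, ∀ t ∈ A, Disjoint s t := fun s hs t ht => (hdisj t ht s hs).symm
  unfold depth
  congr 1
  ext k
  constructor
  · rintro ⟨c, h1, h2, rfl⟩
    exact ⟨c, chain_transfer F A R hdisj c h1 h2, h2, rfl⟩
  · rintro ⟨c, h1, h2, rfl⟩
    exact ⟨c, chain_transfer F R A hdisj' c h1 h2, h2, rfl⟩
end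

section
/- Model a program as a list of gates, each gate given by the finite set of variables it acts on (a Finset of a variable type V). Define entanglement-closed liveness over a list L inductively: v is live at point p if either (direct use) there is an index j with p < j < length L and v in the support of the j-th gate, or (entanglement propagation) there exist a variable w and an index j ≤ p with j < length L such that both v and w lie in the support of the j-th gate and w is live at p. Let P = A ++ B ++ C be a program containing B as a contiguous sub-block. Then for every variable v and every point p < length B: if v is live at p with respect to B alone, then v is live at the shifted point (length A + p) with respect to P. Consequently the semantic lifetime of v computed within B, shifted by length A, is contained in its semantic lifetime computed in P (Lifetime Monotonicity). -/
/-- Entanglement-closed liveness: the least predicate such that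
(1) `v` is live at `p` if some gate strictly after `p` uses `v`;
(2) `v` is live at `p` if some gate at index `≤ p` jointly acts on `v` and on
some variable `w` that is live at `p`. -/
inductive Live {V : Type*} (L : List (Finset V)) : V → ℕ → Prop
  | direct {v : V} {p j : ℕ} (hpj : p < j) (hj : j < L.length)
      (hv : v ∈ L.get ⟨j, hj⟩) : Live L v p
  | entangled {v w : V} {p j : ℕ} (hjp : j ≤ p) (hj : j < L.length)
      (hv : v ∈ L.get ⟨j, hj⟩) (hw : w ∈ L.get ⟨j, hj⟩)
      (hlive : Live L w p) : Live L v p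

namespace Live

variable {V : Type*} {L M : List (Finset V)}

theorem shift (k : ℕ)
    (hLM : ∀ j (hj : j < L.length), ∃ h : k + j < M.length, M[k + j] = L[j])
    {v : V} {p : ℕ} (h : Live L v p) : Live M v (k + p) := by
  induction h with
  | direct hpj hj hv =>
      obtain ⟨hk, hget⟩ := hLM _ hj
      exact .direct (by omega) hk (by simpa [hget] using hv)
  | entangled hjp hj hv hw _ ih =>
      obtain ⟨hk, hget⟩ := hLM _ hj
      exact .entangled (by omega) hk (by simpa [hget] using hv) (by simpa [hget] using hw) ih

end Live

theorem List.getElem_append_append_length_add {α : Type*} (A B C : List α) (j : ℕ)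
    (hj : j < B.length) :
    ∃ h : A.length + j < (A ++ B ++ C).length, (A ++ B ++ C)[A.length + j] = B[j] :=
  ⟨by simp; omega, by
    rw [List.getElem_append_left (by simp; omega), List.getElem_append_right (by omega)]
    simp⟩

/-- Lifetime Monotonicity: if `v` is live at point `p` with
respect to the sub-block `B` alone, then `v` is live at the shifted point
`A.length + p` with respect to the enclosing program `A ++ B ++ C`. -/
theorem lifetime_monotonicity {V : Type*} (A B C : List (Finset V)) :
    ∀ (v : V) (p : ℕ), p < B.length → Live B v p →
      Live (A ++ B ++ C) v (A.length + p) :=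
  fun _ _ _ h => h.shift A.length (List.getElem_append_append_length_add A B C)
end
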